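/- For all real q, ρ with |q| < 1 and |ρ| < 1, all x, y ∈ S(q), and all integers m, k ≥ 0, define γ_{m,k}(x,y|ρ,q) = Σ_{j=0}^∞ (ρ^j/[j]_q!)·H_{j+m}(x|q)·H_{j+k}(y|q). Then γ_{m,k}(x,y|ρ,q) = γ_{0,0}(x,y|ρ,q)·Q_{m,k}(x,y|ρ,q), where Q_{m,k}(x,y|ρ,q) = Σ_{s=0}^{k} (−1)^s·q^{s(s−1)/2}·[k choose s]_q·ρ^s·H_{k−s}(y|q)·P_{m+s}(x|y,ρ,q)/(ρ²;q)_{m+s}; moreover Q_{m,k}(x,y|ρ,q) = Q_{k,m}(y,x|ρ,q). -/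

import Mathlib

noncomputable section

open Finset

/-- The q-integer `[n]_q = 1 + q + ⋯ + q^{n-1}`. -/
def qInt (q : ℝ) (n : ℕ) : ℝ := ∑ i ∈ Finset.range n, q ^ i

/-- The q-factorial `[n]_q!`. -/
def qFact (q : ℝ) (n : ℕ) : ℝ := ∏ j ∈ Finset.range n, qInt q (j + 1)

/-- The q-binomial coefficient. -/
def qBinom (q : ℝ) (n k : ℕ) : ℝ :=
  if k ≤ n then qFact q n / (qFact q (n - k) * qFact q k) else 0

/-- The finite q-Pochhammer symbol `(a;q)_n`. -/
def qPoch (a q : ℝ) (n : ℕ) : ℝ := ∏ j ∈ Finset.range n, (1 - a * q ^ j)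

/-- The infinite q-Pochhammer symbol `(a;q)_∞`. -/
def qPochInf (a q : ℝ) : ℝ := ∏' j : ℕ, (1 - a * q ^ j)

/-- The q-Hermite polynomials `H_n(x|q)`. -/
def qHermite (q : ℝ) : ℕ → ℝ → ℝ
  | 0, _ => 1
  | 1, x => x
  | n + 2, x => x * qHermite q (n + 1) x - qInt q (n + 1) * qHermite q n x

/-- The rescaled q-ultraspherical polynomials `R_n(x|β,q)`. -/
def qUltra (q β : ℝ) : ℕ → ℝ → ℝ
  | 0, _ => 1
  | 1, x => (1 - β) * x
  | n + 2, x => (1 - β * q ^ (n + 1)) * x * qUltra q β (n + 1) x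
      - (1 - β ^ 2 * q ^ n) * qInt q (n + 1) * qUltra q β n x

/-- The Al-Salam–Chihara polynomials `P_n(x|y,ρ,q)`. -/
def ASC (q y ρ : ℝ) : ℕ → ℝ → ℝ
  | 0, _ => 1
  | 1, x => x - ρ * y
  | n + 2, x => (x - ρ * y * q ^ (n + 1)) * ASC q y ρ (n + 1) x
      - (1 - ρ ^ 2 * q ^ n) * qInt q (n + 1) * ASC q y ρ n x

/-- The polynomials `B_n(y|q)` (q⁻¹-Hermite related). -/
def qB (q : ℝ) : ℕ → ℝ → ℝ
  | 0, _ => 1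
  | 1, y => -y
  | n + 2, y => -q ^ (n + 1) * y * qB q (n + 1) y + q ^ n * qInt q (n + 1) * qB q n y

/-- The big q-Hermite polynomials `H_n(x|a,q)`. -/
def bigqHermite (q a : ℝ) : ℕ → ℝ → ℝ
  | 0, _ => 1
  | 1, x => x - a
  | n + 2, x => (x - a * q ^ (n + 1)) * bigqHermite q a (n + 1) x
      - qInt q (n + 1) * bigqHermite q a n x

/-- The probabilistic Hermite polynomials `H_n(x)`. -/
def probHermite : ℕ → ℝ → ℝ
  | 0, _ => 1
  | 1, x => x
  | n + 2, x => x * probHermite (n + 1) x - (n + 1) * probHermite n x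

/-- The probabilistic Hermite polynomials on ℂ. -/
def probHermiteC : ℕ → ℂ → ℂ
  | 0, _ => 1
  | 1, x => x
  | n + 2, x => x * probHermiteC (n + 1) x - (n + 1) * probHermiteC n x

/-- The Chebyshev polynomials of the second kind. -/
def chebU : ℕ → ℝ → ℝ
  | 0, _ => 1
  | 1, x => 2 * x
  | n + 2, x => 2 * x * chebU (n + 1) x - chebU n x

/-- The Chebyshev polynomials of the first kind. -/
def chebT : ℕ → ℝ → ℝ
  | 0, _ => 1
  | 1, x => x
  | n + 2, x => 2 * x * chebT (n + 1) x - chebT n x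

/-- `W_k(x,y,t|q)`. -/
def Wk (q x y t : ℝ) (k : ℕ) : ℝ :=
  (1 - t ^ 2 * q ^ (2 * k)) ^ 2 - (1 - q) * x * y * t * q ^ k * (1 + t ^ 2 * q ^ (2 * k))
    + (1 - q) * t ^ 2 * q ^ (2 * k) * (x ^ 2 + y ^ 2)

/-- `V_k(x,a|q)`. -/
def Vk (q x a : ℝ) (k : ℕ) : ℝ :=
  1 - (1 - q) * a * x * q ^ k + (1 - q) * a ^ 2 * q ^ (2 * k)

/-- `L_k(x,a|q)`. -/
def Lk (q x a : ℝ) (k : ℕ) : ℝ :=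
  (1 + a * q ^ k) ^ 2 - (1 - q) * x ^ 2 * a ^ 2 * q ^ k

/-- The support interval `S(q) = [-2/√(1-q), 2/√(1-q)]` for `|q| < 1`. -/
def Sq (q : ℝ) : Set ℝ := Set.Icc (-(2 / Real.sqrt (1 - q))) (2 / Real.sqrt (1 - q))

/-- The polynomial `Q_{m,k}(x,y|ρ,q)`. -/
def Qmk (q ρ : ℝ) (m k : ℕ) (x y : ℝ) : ℝ :=
  ∑ s ∈ Finset.range (k + 1), (-1 : ℝ) ^ s * q ^ (s * (s - 1) / 2) * qBinom q k s * ρ ^ s *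
    qHermite q (k - s) y * ASC q y ρ (m + s) x / qPoch (ρ ^ 2) q (m + s)

/-- `γ_{m,k}(x,y|ρ,q)`. -/
def gammamk (q ρ : ℝ) (m k : ℕ) (x y : ℝ) : ℝ :=
  ∑' j : ℕ, ρ ^ j / qFact q j * qHermite q (j + m) x * qHermite q (j + k) y

/-!
Both `(m, k) ↦ γ_{m,k}(x,y)` and `(m, k) ↦ γ_{0,0}(x,y) Q_{m,k}(x,y)` solve the pair of
recurrences `F(m+1,k) = x F(m,k) - [m]_q F(m-1,k) - ρ q^m F(m,k+1)` and its mirror image in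
`(k, y)`. Eliminating `F(1,k)` shows that a solution is determined by `F(0,0)` as soon as
`1 - ρ² q^n ≠ 0`, so the two agree; applied to `Q_{k,m}(y,x)`, the same uniqueness gives the
symmetry of `Q`.

For `γ` the recurrences follow termwise from `H_{n+1} = x H_n - [n]_q H_{n-1}` and
`[j+m]_q = [m]_q + q^m [j]_q`, once the series is known to converge. Convergence comes from
Rogers' formula `H_n(2 cos θ / √(1-q)) (1-q)^{n/2} = ∑_j [n choose j]_q e^{i(n-2j)θ}` and the
bounds `0 < c ≤ (q;q)_n ≤ C`. For `Q` the `k`-recurrence is a q-Pascal computation on the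
coefficients, and the `m`-recurrence holds on the row `k = 0` (it is the recurrence of the
Al-Salam–Chihara polynomials); since the two recurrence operators commute, it propagates to
all rows.
-/

section QCalculus

variable {q : ℝ}

lemma qInt_zero : qInt q 0 = 0 := sum_range_zero _

lemma qInt_succ (n : ℕ) : qInt q (n + 1) = qInt q n + q ^ n := sum_range_succ _ _

lemma qInt_add (m n : ℕ) : qInt q (m + n) = qInt q m + q ^ m * qInt q n := by
  simp only [qInt, sum_range_add, mul_sum, pow_add]

lemma one_sub_mul_qInt (n : ℕ) : (1 - q) * qInt q n = 1 - q ^ n := mul_neg_geom_sum q n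

lemma qInt_succ_pos (hq : -1 < q) (n : ℕ) : 0 < qInt q (n + 1) :=
  geom_sum_pos' (by linarith) n.succ_ne_zero

lemma qFact_zero : qFact q 0 = 1 := prod_range_zero _

lemma qFact_succ (n : ℕ) : qFact q (n + 1) = qFact q n * qInt q (n + 1) := prod_range_succ _ _

lemma qFact_pos (hq : -1 < q) (n : ℕ) : 0 < qFact q n :=
  prod_pos fun j _ => qInt_succ_pos hq j

lemma qBinom_add (d s : ℕ) : qBinom q (d + s) s = qFact q (d + s) / (qFact q d * qFact q s) := by
  simp [qBinom]

lemma qBinom_of_lt {n s : ℕ} (h : n < s) : qBinom q n s = 0 := by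
  simp [qBinom, Nat.not_le.2 h]

lemma qBinom_zero_right (hq : -1 < q) (n : ℕ) : qBinom q n 0 = 1 := by
  simp [qBinom, qFact_zero, (qFact_pos hq n).ne']

lemma qBinom_self (hq : -1 < q) (n : ℕ) : qBinom q n n = 1 := by
  simp [qBinom, qFact_zero, (qFact_pos hq n).ne']

lemma qBinom_succ_succ (hq : -1 < q) (n s : ℕ) :
    qBinom q (n + 1) (s + 1) = qBinom q n (s + 1) + q ^ (n - s) * qBinom q n s := by
  rcases lt_trichotomy s n with h | rfl | h
  · obtain ⟨d, rfl⟩ := Nat.exists_eq_add_of_lt h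
    rw [show s + d + 1 + 1 = d + 1 + (s + 1) by ring, show s + d + 1 = d + (s + 1) by ring,
      qBinom_add, qBinom_add, show d + (s + 1) = d + 1 + s by ring, qBinom_add,
      show d + 1 + s - s = d + 1 by omega, show d + 1 + (s + 1) = d + 1 + s + 1 by ring,
      qFact_succ (d + 1 + s), show d + 1 + s + 1 = d + 1 + (s + 1) by ring, qInt_add,
      qFact_succ d, qFact_succ s]
    have := qFact_pos hq d; have := qFact_pos hq s; have := qFact_pos hq (d + 1 + s)
    have := qInt_succ_pos hq d; have := qInt_succ_pos hq s
    field_simp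
  · simp [qBinom_self hq, qBinom_of_lt (Nat.lt_succ_self s)]
  · simp [qBinom_of_lt h, qBinom_of_lt (Nat.succ_lt_succ h), qBinom_of_lt (h.trans s.lt_succ_self)]

lemma qInt_sub_mul_qBinom (hq : -1 < q) (n s : ℕ) :
    qInt q (n - s) * qBinom q n s = qInt q n * qBinom q (n - 1) s := by
  rcases lt_trichotomy s n with h | rfl | h
  · obtain ⟨d, rfl⟩ := Nat.exists_eq_add_of_lt h
    rw [show s + d + 1 = d + 1 + s by ring, show d + 1 + s - 1 = d + s by omega,
      show d + 1 + s - s = d + 1 by omega, qBinom_add, qBinom_add,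
      show d + 1 + s = d + s + 1 by ring, qFact_succ (d + s), qFact_succ d]
    have := qFact_pos hq d; have := qFact_pos hq s; have := qFact_pos hq (d + s)
    have := qInt_succ_pos hq d
    field_simp
  · rcases s with _ | s
    · simp [qInt_zero]
    · simp [qInt_zero, qBinom_of_lt (Nat.lt_succ_self s)]
  · simp [qBinom_of_lt h, qBinom_of_lt (show n - 1 < s by omega)]

lemma one_sub_pow_sub_mul_qBinom (hq : -1 < q) (n s : ℕ) :
    (1 - q ^ (n - s)) * qBinom q n s = (1 - q ^ n) * qBinom q (n - 1) s := by
  rw [← one_sub_mul_qInt, ← one_sub_mul_qInt, mul_assoc, mul_assoc, qInt_sub_mul_qBinom hq]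

end QCalculus

section Recurrence

variable {q ρ x y : ℝ}

/-- `recDefect q ρ x F m k = 0` is the recurrence
`F (m+1) k = x F m k - [m]_q F (m-1) k - ρ q^m F m (k+1)`; the junk value `F (0-1) k` is
harmless since `[0]_q = 0`. -/
def recDefect (q ρ x : ℝ) (F : ℕ → ℕ → ℝ) (m k : ℕ) : ℝ :=
  F (m + 1) k - x * F m k + qInt q m * F (m - 1) k + ρ * q ^ m * F m (k + 1)

def SolvesRec (q ρ x y : ℝ) (F : ℕ → ℕ → ℝ) : Prop :=
  recDefect q ρ x F = 0 ∧ recDefect q ρ y (Function.swap F) = 0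

lemma recDefect_sub (F G : ℕ → ℕ → ℝ) :
    recDefect q ρ x (F - G) = recDefect q ρ x F - recDefect q ρ x G := by
  funext m k
  simp only [recDefect, Pi.sub_apply]
  ring

lemma recDefect_smul (c : ℝ) (F : ℕ → ℕ → ℝ) :
    recDefect q ρ x (c • F) = c • recDefect q ρ x F := by
  funext m k
  simp only [recDefect, Pi.smul_apply, smul_eq_mul]
  ring

lemma recDefect_comm (F : ℕ → ℕ → ℝ) (m k : ℕ) :
    recDefect q ρ x (Function.swap (recDefect q ρ y (Function.swap F))) m k =
      recDefect q ρ y (Function.swap (recDefect q ρ x F)) k m := by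
  rcases m with _ | m <;> rcases k with _ | k <;>
    simp only [recDefect, Function.swap, qInt_zero, qInt_succ, Nat.add_sub_cancel] <;> ring

lemma eq_zero_of_recDefect_eq_zero {G : ℕ → ℕ → ℝ} (h : recDefect q ρ x G = 0)
    (h0 : ∀ k, G 0 k = 0) : G = 0 := by
  suffices ∀ m k, G m k = 0 from funext₂ this
  intro m
  induction m using Nat.strong_induction_on with
  | _ m ih =>
    rcases m with _ | m
    · exact h0
    intro k
    have hm := congrFun₂ h m k
    simp only [recDefect, Pi.zero_apply, ih m m.lt_succ_self, ih (m - 1) (by omega)] at hm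
    linear_combination hm

namespace SolvesRec

variable {F G : ℕ → ℕ → ℝ}

lemma swap (hF : SolvesRec q ρ x y F) : SolvesRec q ρ y x (Function.swap F) := hF.symm

lemma sub (hF : SolvesRec q ρ x y F) (hG : SolvesRec q ρ x y G) : SolvesRec q ρ x y (F - G) :=
  ⟨by rw [recDefect_sub, hF.1, hG.1, sub_zero],
    by rw [show Function.swap (F - G) = Function.swap F - Function.swap G from rfl, recDefect_sub,
      hF.2, hG.2, sub_zero]⟩

lemma smul (hF : SolvesRec q ρ x y F) (c : ℝ) : SolvesRec q ρ x y (c • F) :=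
  ⟨by rw [recDefect_smul, hF.1, smul_zero],
    by rw [show Function.swap (c • F) = c • Function.swap F from rfl, recDefect_smul, hF.2,
      smul_zero]⟩

/-- Eliminating `F 1 k` between the two recurrences leaves a three-term recurrence for the row
`F 0 ·` with leading coefficient `1 - ρ² q^k`. -/
lemma eq_zero (hρq : ∀ n, 1 - ρ ^ 2 * q ^ n ≠ 0) (hF : SolvesRec q ρ x y F)
    (h00 : F 0 0 = 0) : F = 0 := by
  refine eq_zero_of_recDefect_eq_zero hF.1 fun k => ?_
  induction k using Nat.strong_induction_on with
  | _ k ih =>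
    rcases k with _ | k
    · exact h00
    have hfst := congrFun₂ hF.1 0 k
    have hsnd := congrFun₂ hF.2 k 0
    simp only [recDefect, Function.swap, Pi.zero_apply, qInt_zero, pow_zero, ih k k.lt_succ_self,
      ih (k - 1) (by omega)] at hfst hsnd
    refine (mul_eq_zero.1 ?_).resolve_left (hρq k)
    linear_combination hsnd - ρ * q ^ k * hfst

lemma eq (hρq : ∀ n, 1 - ρ ^ 2 * q ^ n ≠ 0) (hF : SolvesRec q ρ x y F)
    (hG : SolvesRec q ρ x y G) (h00 : F 0 0 = G 0 0) : F = G :=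
  sub_eq_zero.1 <| (hF.sub hG).eq_zero hρq (sub_eq_zero.2 h00)

end SolvesRec

end Recurrence

section QmkRecurrence

variable {q ρ x y : ℝ}

lemma qHermite_succ (n : ℕ) (z : ℝ) :
    qHermite q (n + 1) z = z * qHermite q n z - qInt q n * qHermite q (n - 1) z := by
  rcases n with _ | n
  · simp [qHermite, qInt_zero]
  · rfl

lemma ASC_succ (n : ℕ) :
    ASC q y ρ (n + 1) x = (x - ρ * y * q ^ n) * ASC q y ρ n x
      - (1 - ρ ^ 2 * q ^ (n - 1)) * qInt q n * ASC q y ρ (n - 1) x := by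
  rcases n with _ | n
  · simp [ASC, qInt_zero]
  · rfl

lemma qPoch_succ (a : ℝ) (n : ℕ) : qPoch a q (n + 1) = qPoch a q n * (1 - a * q ^ n) :=
  prod_range_succ _ _

def ascRatio (q ρ x y : ℝ) (n : ℕ) : ℝ := ASC q y ρ n x / qPoch (ρ ^ 2) q n

lemma ascRatio_succ (hρq : ∀ n, 1 - ρ ^ 2 * q ^ n ≠ 0) (n : ℕ) :
    (1 - ρ ^ 2 * q ^ n) * ascRatio q ρ x y (n + 1)
      = (x - ρ * y * q ^ n) * ascRatio q ρ x y n - qInt q n * ascRatio q ρ x y (n - 1) := by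
  have hPoch : ∀ n, qPoch (ρ ^ 2) q n ≠ 0 := fun n => prod_ne_zero_iff.2 fun j _ => hρq j
  rcases n with _ | n
  · have h0 : 1 - ρ ^ 2 ≠ 0 := by simpa using hρq 0
    simp [ascRatio, ASC, qPoch, qInt_zero, mul_div_cancel₀ _ h0]
  · simp only [ascRatio, ASC_succ (n + 1), qPoch_succ, Nat.add_sub_cancel]
    field_simp [hPoch n, hρq n, hρq (n + 1)]

def qmkCoeff (q ρ y : ℝ) (k s : ℕ) : ℝ :=
  (-1) ^ s * q ^ (s * (s - 1) / 2) * qBinom q k s * ρ ^ s * qHermite q (k - s) y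

lemma qmkCoeff_of_lt {k s : ℕ} (h : k < s) : qmkCoeff q ρ y k s = 0 := by
  simp [qmkCoeff, qBinom_of_lt h]

lemma qmkCoeff_zero_right (hq : -1 < q) (k : ℕ) : qmkCoeff q ρ y k 0 = qHermite q k y := by
  simp [qmkCoeff, qBinom_zero_right hq]

lemma triangle_succ (s : ℕ) : (s + 1) * (s + 1 - 1) / 2 = s * (s - 1) / 2 + s := by
  rw [← Nat.choose_two_right, ← Nat.choose_two_right, Nat.choose_succ_succ,
    Nat.choose_one_right, add_comm]

lemma qmkCoeff_succ_succ (hq : -1 < q) (k s : ℕ) :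
    qmkCoeff q ρ y (k + 1) (s + 1) = y * qmkCoeff q ρ y k (s + 1)
      - qInt q k * qmkCoeff q ρ y (k - 1) (s + 1) - ρ * q ^ k * qmkCoeff q ρ y k s := by
  rcases lt_trichotomy s k with h | rfl | h
  · obtain ⟨d, rfl⟩ := Nat.exists_eq_add_of_lt h
    have hPascal := qBinom_succ_succ hq (s + d + 1) s
    have hAbsorb := qInt_sub_mul_qBinom hq (s + d + 1) (s + 1)
    have hHermite := qHermite_succ (q := q) d y
    simp only [qmkCoeff, triangle_succ, show s + d + 1 + 1 - (s + 1) = d + 1 by omega,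
      show s + d + 1 - (s + 1) = d by omega, show s + d + 1 - 1 - (s + 1) = d - 1 by omega,
      show s + d + 1 - s = d + 1 by omega] at hPascal hAbsorb ⊢
    rw [pow_add]
    linear_combination (-1) ^ s * (-1) * q ^ (s * (s - 1) / 2) * q ^ s * ρ ^ (s + 1) *
      (qHermite q (d + 1) y * hPascal + qBinom q (s + d + 1) (s + 1) * hHermite
        - qHermite q (d - 1) y * hAbsorb)
  · simp only [qmkCoeff_of_lt (Nat.lt_succ_self s), qmkCoeff_of_lt (show s - 1 < s + 1 by omega)]
    simp only [qmkCoeff, triangle_succ, Nat.sub_self, qBinom_self hq, pow_add]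
    ring
  · simp only [qmkCoeff_of_lt h, qmkCoeff_of_lt (Nat.succ_lt_succ h),
      qmkCoeff_of_lt (h.trans s.lt_succ_self), qmkCoeff_of_lt (show k - 1 < s + 1 by omega)]
    ring

lemma Qmk_eq_sum {m k N : ℕ} (hN : k + 1 ≤ N) :
    Qmk q ρ m k x y = ∑ s ∈ range N, qmkCoeff q ρ y k s * ascRatio q ρ x y (m + s) := by
  calc Qmk q ρ m k x y
      = ∑ s ∈ range (k + 1), qmkCoeff q ρ y k s * ascRatio q ρ x y (m + s) :=
        sum_congr rfl fun s _ => mul_div_assoc _ _ _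
    _ = _ := sum_subset (range_subset_range.2 hN) fun s hsN hsk => by
        rw [qmkCoeff_of_lt (by simp only [mem_range] at hsN hsk; omega), zero_mul]

lemma Qmk_zero_right (hq : -1 < q) (m : ℕ) : Qmk q ρ m 0 x y = ascRatio q ρ x y m := by
  simp [Qmk_eq_sum le_rfl, qmkCoeff_zero_right hq, qHermite]

lemma Qmk_one_right (hq : -1 < q) (m : ℕ) :
    Qmk q ρ m 1 x y = y * ascRatio q ρ x y m - ρ * ascRatio q ρ x y (m + 1) := by
  rw [Qmk_eq_sum le_rfl, sum_range_succ, sum_range_one, qmkCoeff_zero_right hq]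
  simp [qmkCoeff, qBinom_self hq, qHermite, sub_eq_add_neg]

lemma Qmk_zero_zero (hq : -1 < q) : Qmk q ρ 0 0 x y = 1 := by
  simp [Qmk_zero_right hq, ascRatio, ASC, qPoch]

lemma Qmk_recurrence_snd (hq : -1 < q) (m k : ℕ) :
    recDefect q ρ y (Function.swap fun m k => Qmk q ρ m k x y) k m = 0 := by
  have hsplit : ∀ j ≤ k + 1, Qmk q ρ m j x y
      = ∑ s ∈ range (k + 1), qmkCoeff q ρ y j (s + 1) * ascRatio q ρ x y (m + (s + 1))
        + qHermite q j y * ascRatio q ρ x y m := fun j hj => by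
    rw [Qmk_eq_sum (by omega : j + 1 ≤ k + 2), sum_range_succ', qmkCoeff_zero_right hq, add_zero]
  have hshift : Qmk q ρ (m + 1) k x y
      = ∑ s ∈ range (k + 1), qmkCoeff q ρ y k s * ascRatio q ρ x y (m + (s + 1)) := by
    simp only [Qmk_eq_sum le_rfl, add_assoc, add_comm 1]
  have hterm : ∀ s ∈ range (k + 1),
      qmkCoeff q ρ y (k + 1) (s + 1) * ascRatio q ρ x y (m + (s + 1))
      = y * (qmkCoeff q ρ y k (s + 1) * ascRatio q ρ x y (m + (s + 1)))
        - qInt q k * (qmkCoeff q ρ y (k - 1) (s + 1) * ascRatio q ρ x y (m + (s + 1)))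
        - ρ * q ^ k * (qmkCoeff q ρ y k s * ascRatio q ρ x y (m + (s + 1))) :=
    fun s _ => by rw [qmkCoeff_succ_succ hq]; ring
  simp only [recDefect, Function.swap]
  rw [hsplit (k + 1) le_rfl, hsplit k (by omega), hsplit (k - 1) (by omega), hshift,
    sum_congr rfl hterm, sum_sub_distrib, sum_sub_distrib, ← mul_sum, ← mul_sum, ← mul_sum,
    qHermite_succ]
  ring

lemma Qmk_recurrence_fst_zero (hq : -1 < q) (hρq : ∀ n, 1 - ρ ^ 2 * q ^ n ≠ 0) (m : ℕ) :
    recDefect q ρ x (fun m k => Qmk q ρ m k x y) m 0 = 0 := by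
  simp only [recDefect, Qmk_zero_right hq, Qmk_one_right hq]
  linear_combination ascRatio_succ (x := x) (y := y) hρq m

/-- The `m`-recurrence of `Q` is inherited from its `k = 0` row, since the two recurrence
operators commute. -/
theorem solvesRec_Qmk (hq : -1 < q) (hρq : ∀ n, 1 - ρ ^ 2 * q ^ n ≠ 0) :
    SolvesRec q ρ x y (fun m k => Qmk q ρ m k x y) := by
  have hsnd : recDefect q ρ y (Function.swap fun m k => Qmk q ρ m k x y) = 0 :=
    funext₂ fun k m => Qmk_recurrence_snd hq m k
  have hfst : Function.swap (recDefect q ρ x fun m k => Qmk q ρ m k x y) = 0 := by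
    refine eq_zero_of_recDefect_eq_zero (q := q) (ρ := ρ) (x := y) (funext₂ fun k m => ?_)
      (Qmk_recurrence_fst_zero hq hρq)
    rw [← recDefect_comm, hsnd]
    simp [recDefect, Function.swap]
  exact ⟨funext₂ fun m k => congrFun₂ hfst k m, hsnd⟩

theorem Qmk_symm (hq : -1 < q) (hρq : ∀ n, 1 - ρ ^ 2 * q ^ n ≠ 0) (m k : ℕ) :
    Qmk q ρ m k x y = Qmk q ρ k m y x :=
  congrFun₂ ((solvesRec_Qmk hq hρq).eq hρq (solvesRec_Qmk hq hρq).swap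
    (by simp [Function.swap, Qmk_zero_zero hq])) m k

end QmkRecurrence

section Bounds

open Real

variable {q : ℝ}

lemma one_sub_pow_mul_qFact (n : ℕ) : (1 - q) ^ n * qFact q n = qPoch q q n := by
  induction n with
  | zero => simp [qFact_zero, qPoch]
  | succ n ih =>
    rw [qFact_succ, qPoch_succ, ← ih]
    linear_combination (1 - q) ^ n * qFact q n * one_sub_mul_qInt (q := q) (n + 1)

lemma exp_neg_div_le_one_sub {a t : ℝ} (ha : 0 ≤ a) (hat : a ≤ t) (ht : t < 1) :
    exp (-(a / (1 - t))) ≤ 1 - a := by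
  have ha1 : 0 < 1 - a := by linarith
  have hexp : 1 / (1 - a) ≤ exp (a / (1 - a)) := by
    have := add_one_le_exp (a / (1 - a))
    rwa [div_add_one ha1.ne', add_sub_cancel] at this
  calc exp (-(a / (1 - t))) ≤ exp (-(a / (1 - a))) :=
        exp_le_exp.2 (neg_le_neg (div_le_div_of_nonneg_left ha (by linarith) (by linarith)))
    _ ≤ 1 - a := by
        rw [exp_neg, inv_le_comm₀ (exp_pos _) ha1, ← one_div]
        exact hexp

lemma sum_range_pow_succ_le {t : ℝ} (ht0 : 0 ≤ t) (ht1 : t < 1) (n : ℕ) :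
    ∑ j ∈ range n, t ^ (j + 1) ≤ t / (1 - t) := by
  have hgeom := geom_sum_Ico_le_of_lt_one (m := 0) (n := n) ht0 ht1
  rw [← range_eq_Ico, pow_zero] at hgeom
  simp only [pow_succ', ← mul_sum]
  calc t * ∑ j ∈ range n, t ^ j ≤ t * (1 / (1 - t)) := mul_le_mul_of_nonneg_left hgeom ht0
    _ = t / (1 - t) := mul_one_div t (1 - t)

lemma one_sub_abs_pow_le (j : ℕ) : 1 - |q| ^ (j + 1) ≤ 1 - q * q ^ j := by
  have := le_abs_self (q ^ (j + 1))
  rw [abs_pow] at this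
  rw [← pow_succ']
  linarith

lemma exp_neg_le_qPoch_self (hq : |q| < 1) (n : ℕ) :
    exp (-(|q| / (1 - |q|) ^ 2)) ≤ qPoch q q n := by
  have ht : 0 ≤ |q| := abs_nonneg q
  calc exp (-(|q| / (1 - |q|) ^ 2))
      ≤ exp (∑ j ∈ range n, -(|q| ^ (j + 1) / (1 - |q|))) := by
        rw [sum_neg_distrib, ← sum_div, sq, ← div_div]
        gcongr
        exact sum_range_pow_succ_le ht hq n
    _ = ∏ j ∈ range n, exp (-(|q| ^ (j + 1) / (1 - |q|))) := exp_sum _ _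
    _ ≤ ∏ j ∈ range n, (1 - q * q ^ j) :=
        prod_le_prod (fun _ _ => (exp_pos _).le) fun j _ =>
          (exp_neg_div_le_one_sub (by positivity) (pow_le_of_le_one ht hq.le (by omega)) hq).trans
            (one_sub_abs_pow_le j)

lemma qPoch_self_pos (hq : |q| < 1) (n : ℕ) : 0 < qPoch q q n :=
  (exp_pos _).trans_le (exp_neg_le_qPoch_self hq n)

lemma qPoch_self_le_exp (hq : |q| < 1) (n : ℕ) : qPoch q q n ≤ exp (|q| / (1 - |q|)) := by
  calc qPoch q q n ≤ ∏ j ∈ range n, exp (|q| ^ (j + 1)) := by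
        refine prod_le_prod (fun j _ => ?_) fun j _ => ?_
        · linarith [one_sub_abs_pow_le (q := q) j, pow_le_one₀ (abs_nonneg q) hq.le (n := j + 1)]
        · have := neg_abs_le (q ^ (j + 1))
          rw [abs_pow, pow_succ' q] at this
          linarith [add_one_le_exp (|q| ^ (j + 1))]
    _ = exp (∑ j ∈ range n, |q| ^ (j + 1)) := (exp_sum _ _).symm
    _ ≤ exp (|q| / (1 - |q|)) := exp_le_exp.2 (sum_range_pow_succ_le (abs_nonneg q) hq n)

lemma qBinom_add_eq_qPoch (hq : q ≠ 1) (d s : ℕ) :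
    qBinom q (d + s) s = qPoch q q (d + s) / (qPoch q q d * qPoch q q s) := by
  rw [qBinom_add, ← one_sub_pow_mul_qFact, ← one_sub_pow_mul_qFact, ← one_sub_pow_mul_qFact,
    mul_mul_mul_comm, ← pow_add, mul_div_mul_left _ _ (pow_ne_zero _ (sub_ne_zero.2 hq.symm))]

lemma exists_abs_qBinom_le (hq : |q| < 1) : ∃ C, ∀ n s, |qBinom q n s| ≤ C := by
  set L := exp (-(|q| / (1 - |q|) ^ 2))
  refine ⟨exp (|q| / (1 - |q|)) / (L * L), fun n s => ?_⟩
  rcases le_or_gt s n with h | h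
  · obtain ⟨d, rfl⟩ := Nat.exists_eq_add_of_le' h
    have hq1 : q ≠ 1 := fun h1 => by simp [h1] at hq
    have hL := exp_pos (-(|q| / (1 - |q|) ^ 2))
    rw [qBinom_add_eq_qPoch hq1, abs_of_pos (div_pos (qPoch_self_pos hq _)
      (mul_pos (qPoch_self_pos hq _) (qPoch_self_pos hq _)))]
    exact div_le_div₀ (by positivity) (qPoch_self_le_exp hq _) (by positivity)
      (mul_le_mul (exp_neg_le_qPoch_self hq d) (exp_neg_le_qPoch_self hq s) hL.le
        (qPoch_self_pos hq d).le)
  · rw [qBinom_of_lt h, abs_zero]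
    positivity

end Bounds

section Rogers

variable {q : ℝ}

/-- Rogers' sum `∑ⱼ [n choose j]_q u^(n-j) v^j`; with `u = e^{iθ}`, `v = e^{-iθ}` it equals
`H_n(2 cos θ / √(1-q) | q) · (1-q)^(n/2)`. -/
def rogersSum (q : ℝ) (n : ℕ) (u v : ℂ) : ℂ :=
  ∑ j ∈ range (n + 1), (qBinom q n j : ℂ) * u ^ (n - j) * v ^ j

lemma rogersSum_eq_sum {n N : ℕ} (hN : n + 1 ≤ N) (u v : ℂ) :
    rogersSum q n u v = ∑ j ∈ range N, (qBinom q n j : ℂ) * u ^ (n - j) * v ^ j :=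
  sum_subset (range_subset_range.2 hN) fun j hjN hjn => by
    rw [qBinom_of_lt (by simp only [mem_range] at hjN hjn; omega)]
    simp

lemma rogersSum_term_succ (hq : -1 < q) {u v : ℂ} (huv : u * v = 1) (n i : ℕ) :
    (qBinom q (n + 2) (i + 1) : ℂ) * u ^ (n + 2 - (i + 1)) * v ^ (i + 1)
      = u * ((qBinom q (n + 1) (i + 1) : ℂ) * u ^ (n + 1 - (i + 1)) * v ^ (i + 1))
        + v * ((qBinom q (n + 1) i : ℂ) * u ^ (n + 1 - i) * v ^ i)
        - (1 - (q : ℂ) ^ (n + 1)) * ((qBinom q n i : ℂ) * u ^ (n - i) * v ^ i) := by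
  have hPascal := qBinom_succ_succ hq (n + 1) i
  have hAbsorb := one_sub_pow_sub_mul_qBinom hq (n + 1) i
  rw [Nat.add_sub_cancel] at hAbsorb
  rcases lt_trichotomy i (n + 1) with h | rfl | h
  · obtain ⟨d, rfl⟩ := Nat.exists_eq_add_of_le' (Nat.lt_succ_iff.1 h)
    rw [hPascal, show d + i + 2 - (i + 1) = d + 1 by omega, show d + i + 1 - (i + 1) = d by omega,
      show d + i + 1 - i = d + 1 by omega, Nat.add_sub_cancel]
    rw [show d + i + 1 - i = d + 1 by omega] at hAbsorb
    have hAbsorbC := congrArg (fun r : ℝ => (r : ℂ)) hAbsorb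
    push_cast at hAbsorbC ⊢
    linear_combination -(u ^ d * v ^ i) * hAbsorbC
      - (qBinom q (d + i + 1) i : ℂ) * u ^ d * v ^ i * (1 - (q : ℂ) ^ (d + 1)) * huv
  · simp [qBinom_self hq, qBinom_of_lt (Nat.lt_succ_self _), pow_succ, mul_comm]
  · simp [qBinom_of_lt h, qBinom_of_lt (Nat.succ_lt_succ h),
      qBinom_of_lt (show n + 1 < i + 1 by omega), qBinom_of_lt (show n < i by omega)]

lemma rogersSum_add_two (hq : -1 < q) {u v : ℂ} (huv : u * v = 1) (n : ℕ) :
    rogersSum q (n + 2) u v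
      = (u + v) * rogersSum q (n + 1) u v - (1 - (q : ℂ) ^ (n + 1)) * rogersSum q n u v := by
  have hHead : rogersSum q (n + 1) u v
      = ∑ i ∈ range (n + 2),
          (qBinom q (n + 1) (i + 1) : ℂ) * u ^ (n + 1 - (i + 1)) * v ^ (i + 1) + u ^ (n + 1) := by
    simp [rogersSum_eq_sum (show n + 1 + 1 ≤ n + 3 by omega), sum_range_succ' _ (n + 2),
      qBinom_zero_right hq]
  rw [rogersSum, sum_range_succ', sum_congr rfl fun i _ => rogersSum_term_succ hq huv n i,
    sum_sub_distrib, sum_add_distrib, ← mul_sum, ← mul_sum, ← mul_sum,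
    ← rogersSum_eq_sum (show n + 1 ≤ n + 2 by omega), ← rogersSum, add_mul, hHead]
  rw [qBinom_zero_right hq, Nat.sub_zero, pow_zero, Complex.ofReal_one]
  ring

lemma qHermite_mul_pow_eq_rogersSum (hq : -1 < q) {z s : ℝ} {u v : ℂ} (hs : s ^ 2 = 1 - q)
    (huv : u * v = 1) (hzs : u + v = z * s) (n : ℕ) :
    ((qHermite q n z * s ^ n : ℝ) : ℂ) = rogersSum q n u v := by
  induction n using Nat.twoStepInduction with
  | zero => simp [rogersSum, qHermite, qBinom_zero_right hq]
  | one =>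
    simp [rogersSum, sum_range_succ, qHermite, qBinom_zero_right hq, qBinom_self hq, ← hzs]
  | more n ih0 ih1 =>
    have hsC : (s : ℂ) ^ 2 = 1 - q := by exact_mod_cast hs
    have hqInt : (1 - (q : ℂ)) * qInt q (n + 1) = 1 - (q : ℂ) ^ (n + 1) := by
      exact_mod_cast one_sub_mul_qInt (q := q) (n + 1)
    rw [rogersSum_add_two hq huv, ← ih0, ← ih1, show qHermite q (n + 2) z
      = z * qHermite q (n + 1) z - qInt q (n + 1) * qHermite q n z from rfl]
    push_cast
    linear_combination -(qHermite q (n + 1) z * (s : ℂ) ^ (n + 1)) * hzs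
      - qHermite q n z * (s : ℂ) ^ n * (qInt q (n + 1) * hsC + hqInt)

lemma norm_rogersSum_le {u v : ℂ} (hu : ‖u‖ = 1) (hv : ‖v‖ = 1) (n : ℕ) :
    ‖rogersSum q n u v‖ ≤ ∑ j ∈ range (n + 1), |qBinom q n j| :=
  (norm_sum_le _ _).trans_eq (sum_congr rfl fun j _ => by simp [hu, hv])

open Complex in
theorem exists_abs_qHermite_mul_pow_le (hq : |q| < 1) {z : ℝ} (hz : z ∈ Sq q) :
    ∃ C, ∀ n : ℕ, |qHermite q n z| * √(1 - q) ^ n ≤ C * (n + 1) := by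
  obtain ⟨C, hC⟩ := exists_abs_qBinom_le hq
  have h1q : 0 < 1 - q := by linarith [(abs_lt.1 hq).2]
  set s := √(1 - q)
  have hs : 0 < s := Real.sqrt_pos.2 h1q
  have hzs1 : z * s / 2 ≤ 1 := by
    have := hz.2
    rw [le_div_iff₀ hs] at this
    linarith
  have hzs2 : -1 ≤ z * s / 2 := by
    have := hz.1
    rw [← neg_div, div_le_iff₀ hs] at this
    linarith
  set θ := Real.arccos (z * s / 2)
  have hcos : Real.cos θ = z * s / 2 := Real.cos_arccos hzs2 hzs1
  refine ⟨C, fun n => ?_⟩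
  have hrep := qHermite_mul_pow_eq_rogersSum (by linarith [(abs_lt.1 hq).1])
    (u := exp (θ * I)) (v := exp (-θ * I)) (Real.sq_sqrt h1q.le)
    (by rw [← Complex.exp_add]; simp)
    (by rw [← two_cos, ← ofReal_cos, hcos]; push_cast; ring) n
  calc |qHermite q n z| * s ^ n = ‖((qHermite q n z * s ^ n : ℝ) : ℂ)‖ := by
        rw [norm_real, Real.norm_eq_abs, abs_mul, abs_pow, abs_of_pos hs]
    _ ≤ ∑ j ∈ range (n + 1), |qBinom q n j| := by
        rw [hrep]
        exact norm_rogersSum_le (norm_exp_ofReal_mul_I θ)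
          (by simpa using norm_exp_ofReal_mul_I (-θ)) n
    _ ≤ ∑ j ∈ range (n + 1), C := sum_le_sum fun j _ => hC n j
    _ = C * (n + 1) := by simp [mul_comm]

end Rogers

section Gamma

variable {q ρ x y : ℝ}

lemma abs_gammamk_term_eq (hq : |q| < 1) (m k j : ℕ) :
    |ρ ^ j / qFact q j * qHermite q (j + m) x * qHermite q (j + k) y|
      = |ρ| ^ j / qPoch q q j * (|qHermite q (j + m) x| * √(1 - q) ^ (j + m))
        * (|qHermite q (j + k) y| * √(1 - q) ^ (j + k)) / √(1 - q) ^ (m + k) := by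
  have h1q : 0 < 1 - q := by linarith [(abs_lt.1 hq).2]
  have hs : 0 < √(1 - q) := Real.sqrt_pos.2 h1q
  have hF : qFact q j = qPoch q q j / √(1 - q) ^ (2 * j) := by
    rw [pow_mul, Real.sq_sqrt h1q.le, ← one_sub_pow_mul_qFact,
      mul_div_cancel_left₀ _ (by positivity)]
  rw [abs_mul, abs_mul, abs_div, abs_pow, abs_of_pos (qFact_pos (by linarith [(abs_lt.1 hq).1]) j),
    hF]
  have := qPoch_self_pos hq j
  field_simp
  ring

lemma add_succ_mul_add_succ_le (j m k : ℕ) :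
    ((j + m : ℕ) + 1 : ℝ) * ((j + k : ℕ) + 1)
      ≤ (m + 1) * (k + 1) * ((j + 2).descFactorial 2) := by
  have hj : (0 : ℝ) ≤ j := j.cast_nonneg
  have hm : (0 : ℝ) ≤ m := m.cast_nonneg
  have hk : (0 : ℝ) ≤ k := k.cast_nonneg
  rw [Nat.cast_descFactorial_two]
  push_cast
  calc ((j : ℝ) + m + 1) * (j + k + 1) ≤ ((m + 1) * (j + 1)) * ((k + 1) * (j + 2)) := by
        gcongr <;> nlinarith
    _ = _ := by ring

lemma summable_gammamk (hq : |q| < 1) (hρ : |ρ| < 1) (hx : x ∈ Sq q) (hy : y ∈ Sq q)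
    (m k : ℕ) :
    Summable fun j => ρ ^ j / qFact q j * qHermite q (j + m) x * qHermite q (j + k) y := by
  obtain ⟨Cx, hCx⟩ := exists_abs_qHermite_mul_pow_le hq hx
  obtain ⟨Cy, hCy⟩ := exists_abs_qHermite_mul_pow_le hq hy
  have hs : 0 < √(1 - q) := Real.sqrt_pos.2 (by linarith [(abs_lt.1 hq).2])
  have hCx0 : 0 ≤ Cx := by
    simpa using (mul_nonneg (abs_nonneg _) (pow_nonneg hs.le 0)).trans (hCx 0)
  have hCy0 : 0 ≤ Cy := by
    simpa using (mul_nonneg (abs_nonneg _) (pow_nonneg hs.le 0)).trans (hCy 0)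
  set L := Real.exp (-(|q| / (1 - |q|) ^ 2))
  have hgeom := summable_descFactorial_mul_geometric_of_norm_lt_one 2
    (r := |ρ|) (by rwa [Real.norm_eq_abs, abs_abs])
  refine Summable.of_norm_bounded
    (hgeom.mul_left (Cx * Cy * (m + 1) * (k + 1) / (L * √(1 - q) ^ (m + k)))) fun j => ?_
  rw [Real.norm_eq_abs, abs_gammamk_term_eq hq]
  calc |ρ| ^ j / qPoch q q j * (|qHermite q (j + m) x| * √(1 - q) ^ (j + m))
        * (|qHermite q (j + k) y| * √(1 - q) ^ (j + k)) / √(1 - q) ^ (m + k)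
      ≤ |ρ| ^ j / L * (Cx * ((j + m : ℕ) + 1)) * (Cy * ((j + k : ℕ) + 1))
          / √(1 - q) ^ (m + k) := by
        gcongr |ρ| ^ j / ?_ * ?_ * ?_ / _
        · exact exp_neg_le_qPoch_self hq j
        · exact hCx (j + m)
        · exact hCy (j + k)
    _ = Cx * Cy / (L * √(1 - q) ^ (m + k)) * |ρ| ^ j
          * (((j + m : ℕ) + 1 : ℝ) * ((j + k : ℕ) + 1)) := by ring
    _ ≤ Cx * Cy / (L * √(1 - q) ^ (m + k)) * |ρ| ^ j
          * ((m + 1) * (k + 1) * ((j + 2).descFactorial 2)) :=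
        mul_le_mul_of_nonneg_left (add_succ_mul_add_succ_le j m k) (by positivity)
    _ = _ := by ring

lemma gammamk_recurrence (hq : |q| < 1) (hρ : |ρ| < 1) (hx : x ∈ Sq q) (hy : y ∈ Sq q)
    (m k : ℕ) : recDefect q ρ x (fun m k => gammamk q ρ m k x y) m k = 0 := by
  have hq' : -1 < q := (abs_lt.1 hq).1
  set T : ℕ → ℕ → ℕ → ℝ := fun m k j =>
    ρ ^ j / qFact q j * qHermite q (j + m) x * qHermite q (j + k) y
  have hT : ∀ m k, HasSum (T m k) (gammamk q ρ m k x y) :=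
    fun m k => (summable_gammamk hq hρ hx hy m k).hasSum
  set U : ℕ → ℝ := fun j =>
    ρ ^ j * qInt q j / qFact q j * qHermite q (j + m - 1) x * qHermite q (j + k) y
  -- `H_{j+m+1} = x H_{j+m} - ([m] + q^m [j]) H_{j+m-1}`; the `q^m [j]` part, shifted by one in
  -- `j`, sums to `q^m ρ γ_{m,k+1}`.
  have hU : HasSum U (ρ * gammamk q ρ m (k + 1) x y) := by
    have hUsucc : (fun j => U (j + 1)) = fun j => ρ * T m (k + 1) j := by
      funext j
      simp only [U, T]
      rw [qFact_succ, pow_succ, show j + 1 + m - 1 = j + m by omega,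
        show j + 1 + k = j + (k + 1) by ring]
      field_simp [(qInt_succ_pos hq' j).ne', (qFact_pos hq' j).ne']
    refine (hasSum_nat_add_iff' 1).mp ?_
    rw [hUsucc, sum_range_one, show U 0 = 0 by simp [U, qInt_zero], sub_zero]
    exact (hT m (k + 1)).mul_left ρ
  have hpoint :
      ∀ j, T (m + 1) k j - x * T m k j + qInt q m * T (m - 1) k j + q ^ m * U j = 0 := by
    intro j
    have hH := qHermite_succ (q := q) (j + m) x
    have hI := qInt_add (q := q) m j
    have hshift : qInt q m * qHermite q (j + (m - 1)) x = qInt q m * qHermite q (j + m - 1) x := by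
      rcases m with _ | m
      · simp [qInt_zero]
      · rfl
    simp only [T, U, ← add_assoc]
    rw [add_comm m j] at hI
    linear_combination ρ ^ j / qFact q j * qHermite q (j + k) y
      * (hH - qHermite q (j + m - 1) x * hI + hshift)
  have hsum := (((hT (m + 1) k).sub ((hT m k).mul_left x)).add
    ((hT (m - 1) k).mul_left (qInt q m))).add (hU.mul_left (q ^ m))
  have hzero := hsum.unique (by convert hasSum_zero with j; exact hpoint j)
  simp only [recDefect]
  linear_combination hzero

lemma gammamk_comm (m k : ℕ) : gammamk q ρ m k x y = gammamk q ρ k m y x :=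
  tsum_congr fun j => by ring

theorem solvesRec_gammamk (hq : |q| < 1) (hρ : |ρ| < 1) (hx : x ∈ Sq q) (hy : y ∈ Sq q) :
    SolvesRec q ρ x y (fun m k => gammamk q ρ m k x y) := by
  have hswap : Function.swap (fun m k => gammamk q ρ m k x y) = fun k m => gammamk q ρ k m y x :=
    funext₂ fun k m => gammamk_comm m k
  exact ⟨funext₂ (gammamk_recurrence hq hρ hx hy),
    hswap ▸ funext₂ (gammamk_recurrence hq hρ hy hx)⟩

end Gamma

lemma one_sub_sq_mul_pow_pos {q ρ : ℝ} (hq : |q| ≤ 1) (hρ : |ρ| < 1) (n : ℕ) :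
    0 < 1 - ρ ^ 2 * q ^ n := by
  have h1 : ρ ^ 2 * q ^ n ≤ ρ ^ 2 :=
    calc ρ ^ 2 * q ^ n ≤ |ρ ^ 2 * q ^ n| := le_abs_self _
      _ = ρ ^ 2 * |q| ^ n := by rw [abs_mul, abs_pow, abs_pow, sq_abs]
      _ ≤ ρ ^ 2 := mul_le_of_le_one_right (sq_nonneg ρ) (pow_le_one₀ (abs_nonneg q) hq)
  have h2 : ρ ^ 2 < 1 := by rw [← sq_abs]; exact pow_lt_one₀ (abs_nonneg ρ) hρ two_ne_zero
  linarith

/-- `γ_{m,k} = γ_{0,0}·Q_{m,k}` and the symmetry `Q_{m,k}(x,y) = Q_{k,m}(y,x)`. -/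
theorem gammamk_eq_gamma_zero_mul_Qmk (q ρ x y : ℝ) (hq : |q| < 1) (hρ : |ρ| < 1)
    (hx : x ∈ Sq q) (hy : y ∈ Sq q) (m k : ℕ) :
    gammamk q ρ m k x y = gammamk q ρ 0 0 x y * Qmk q ρ m k x y ∧
    Qmk q ρ m k x y = Qmk q ρ k m y x := by
  have hq' : -1 < q := (abs_lt.1 hq).1
  have hρq : ∀ n, 1 - ρ ^ 2 * q ^ n ≠ 0 := fun n => (one_sub_sq_mul_pow_pos hq.le hρ n).ne'
  have hQ := (solvesRec_Qmk (x := x) (y := y) hq' hρq).smul (gammamk q ρ 0 0 x y)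
  refine ⟨congrFun₂ ((solvesRec_gammamk hq hρ hx hy).eq hρq hQ ?_) m k,
    Qmk_symm hq' hρq m k⟩
  simp [Qmk_zero_zero hq']
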